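/- For n ≥ 5, a system with n coin types C = (1, c₂, ..., c_{n-1}, 2c_{n-1} − c₂) is canonical with noncanonical subsystem C' = (1, c₂, ..., c_{n-1}) if and only if C = (1, 2, 3, ..., n−3, c_{n-2}, c_{n-2}+1, 2c_{n-2}) and c_{n-2} > n−2. -/

import Mathlib

open Finset

/-- `x` is a representation of value `v` in the coin system `c 1, …, c n`. -/
def IsRepr (n : ℕ) (c : ℕ → ℕ) (v : ℕ) (x : ℕ → ℕ) : Prop :=
  ∑ i ∈ Finset.Icc 1 n, c i * x i = v

/-- Minimum number of coins over all representations of `v`. -/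
noncomputable def opt (n : ℕ) (c : ℕ → ℕ) (v : ℕ) : ℕ :=
  sInf {k | ∃ x : ℕ → ℕ, IsRepr n c v x ∧ ∑ i ∈ Finset.Icc 1 n, x i = k}

/-- Number of coins used by the greedy algorithm to pay `v`. -/
def grd (n : ℕ) (c : ℕ → ℕ) (v : ℕ) : ℕ :=
  if hv : v = 0 then 0
  else
    let m := ((Finset.Icc 1 n).filter (fun i => c i ≤ v)).sup c
    if hm : 0 < m then grd n c (v - m) + 1 else 0
termination_by v
decreasing_by omega

/-- The system is canonical: greedy is optimal for every positive value. -/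
def Canonical (n : ℕ) (c : ℕ → ℕ) : Prop :=
  ∀ v, 0 < v → opt n c v = grd n c v

/-- `w` is a counterexample to the system. -/
def IsCex (n : ℕ) (c : ℕ → ℕ) (w : ℕ) : Prop :=
  0 < w ∧ opt n c w < grd n c w

/-- `w` is the minimum counterexample to the system. -/
def MinCex (n : ℕ) (c : ℕ → ℕ) (w : ℕ) : Prop :=
  IsCex n c w ∧ ∀ u, IsCex n c u → w ≤ u

/-- A (currency) system: first coin is `1` and coins strictly increase. -/
def IsSystem (n : ℕ) (c : ℕ → ℕ) : Prop :=
  c 1 = 1 ∧ StrictMonoOn c (Set.Icc 1 n)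

/-!
Write `n = k + 3` and `p = c (k + 1)`.

For `C = (1, …, k, p, p + 1, 2p)` with `p > k + 1` the greedy count has a closed form on `[0, 2p)`
and grows by one per period `2p`; from it, removing any coin lowers the greedy count by at most one,
and induction on an optimal representation then shows that `C` is canonical. In `C'`, greedy pays
`2p` as `(p + 1) + k + …`, with at least three coins instead of two.

Conversely, canonicity of `C` at `2 c (k + 2) - 1` gives `c (k + 1) + c 2 ≤ c (k + 2) + 1`. The
minimal counterexample of `C'` is at least `c (k + 3)`, since below it `C` and `C'` agree, and
smaller than `c (k + 1) + c (k + 2)` by Kozen–Zaks; so equality holds and `c (k + 3)` is a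
counterexample of `C'`. Canonicity at `c (k + 1) + c j` makes `c j + 1 - c 2` a coin, so the small
coins form an arithmetic progression of difference `c 2 - 1`. A congruence modulo `c 2 - 1` rules
out `c 2 ≥ 3`, and greedy failing at `c (k + 3)` forces `c k + 2 ≤ c (k + 1)`.
-/

namespace IsSystem

variable {n : ℕ} {c : ℕ → ℕ}

lemma coin_lt (hsys : IsSystem n c) {a b : ℕ} (ha : 1 ≤ a) (hab : a < b) (hb : b ≤ n) :
    c a < c b :=
  hsys.2 ⟨ha, by omega⟩ ⟨by omega, hb⟩ hab

lemma coin_le (hsys : IsSystem n c) {a b : ℕ} (ha : 1 ≤ a) (hab : a ≤ b) (hb : b ≤ n) :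
    c a ≤ c b :=
  hsys.2.monotoneOn ⟨ha, by omega⟩ ⟨by omega, hb⟩ hab

lemma le_coin (hsys : IsSystem n c) {a : ℕ} (ha : 1 ≤ a) (han : a ≤ n) : a ≤ c a := by
  induction a, ha using Nat.le_induction with
  | base => exact hsys.1.ge
  | succ a ha ih =>
    have := hsys.coin_lt ha (by omega : a < a + 1) han
    have := ih (by omega)
    omega

lemma mono {m : ℕ} (hsys : IsSystem n c) (hmn : m ≤ n) : IsSystem m c :=
  ⟨hsys.1, hsys.2.mono (Set.Icc_subset_Icc_right hmn)⟩

lemma coin_succ_eq_of_exists_coin_add_eq (hsys : IsSystem n c) {K : ℕ} (hK : K ≤ n)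
    (h : ∀ j, 2 ≤ j → j ≤ K → ∃ i ∈ Icc 1 n, c i + c 2 = c j + 1) :
    ∀ j < K, c (j + 1) = j * (c 2 - 1) + 1 := by
  intro j
  induction j using Nat.strong_induction_on with
  | _ j ih =>
    intro hj
    rcases j with _ | _ | j
    · simpa using hsys.1
    · show c 2 = 1 * (c 2 - 1) + 1
      have := hsys.le_coin (a := 2) (by omega) (by omega)
      omega
    have hc2 := hsys.le_coin (a := 2) (by omega) (by omega)
    show c (j + 3) = (j + 2) * (c 2 - 1) + 1
    have h1 : c (j + 1) = j * (c 2 - 1) + 1 := ih j (by omega) (by omega)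
    have h2 : c (j + 2) = (j + 1) * (c 2 - 1) + 1 := ih (j + 1) (by omega) (by omega)
    have hlt := hsys.coin_lt (a := j + 2) (b := j + 3) (by omega) (by omega) (by omega)
    obtain ⟨i, hi, hci⟩ := h (j + 3) (by omega) (by omega)
    rw [mem_Icc] at hi
    have e1 : (j + 1) * (c 2 - 1) = j * (c 2 - 1) + (c 2 - 1) := by ring
    have e2 : (j + 2) * (c 2 - 1) = (j + 1) * (c 2 - 1) + (c 2 - 1) := by ring
    have hij : i = j + 2 := by
      rcases (by omega : i ≤ j + 1 ∨ i = j + 2 ∨ j + 3 ≤ i) with hi' | hi' | hi'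
      · have := hsys.coin_le hi.1 hi' (by omega)
        omega
      · exact hi'
      · have := hsys.coin_le (by omega) hi' hi.2
        omega
    subst hij
    omega

end IsSystem

section Representations

variable {n : ℕ} {c : ℕ → ℕ} {v : ℕ}

lemma sum_mul_add_single (w x : ℕ → ℕ) {j : ℕ} (hj : j ∈ Icc 1 n) :
    ∑ i ∈ Icc 1 n, w i * (x + Pi.single j 1 : ℕ → ℕ) i =
      ∑ i ∈ Icc 1 n, w i * x i + w j := by
  simp [mul_add, sum_add_distrib, Pi.single_apply, hj]

lemma sum_add_single (x : ℕ → ℕ) {j : ℕ} (hj : j ∈ Icc 1 n) :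
    ∑ i ∈ Icc 1 n, (x + Pi.single j 1 : ℕ → ℕ) i = ∑ i ∈ Icc 1 n, x i + 1 := by
  simp [sum_add_distrib, Pi.single_apply, hj]

lemma IsRepr.zero : IsRepr n c 0 0 := by simp [IsRepr]

lemma IsRepr.add_single {x : ℕ → ℕ} {j : ℕ} (hx : IsRepr n c v x) (hj : j ∈ Icc 1 n) :
    IsRepr n c (v + c j) (x + Pi.single j 1) := by
  rw [IsRepr, sum_mul_add_single c x hj, hx]

lemma opt_le {x : ℕ → ℕ} (hx : IsRepr n c v x) : opt n c v ≤ ∑ i ∈ Icc 1 n, x i :=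
  Nat.sInf_le ⟨x, hx, rfl⟩

lemma exists_repr_sum_eq_opt (hc1 : c 1 = 1) (hn : 1 ≤ n) (v : ℕ) :
    ∃ x, IsRepr n c v x ∧ ∑ i ∈ Icc 1 n, x i = opt n c v := by
  have hones : IsRepr n c v (v • Pi.single 1 1) := by
    simp [IsRepr, Pi.single_apply, hn, hc1]
  exact Nat.sInf_mem (s := {k | ∃ x, IsRepr n c v x ∧ ∑ i ∈ Icc 1 n, x i = k})
    ⟨_, _, hones, rfl⟩

lemma opt_add_coin_le (hc1 : c 1 = 1) (hn : 1 ≤ n) {j : ℕ} (hj : j ∈ Icc 1 n) (v : ℕ) :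
    opt n c (v + c j) ≤ opt n c v + 1 := by
  obtain ⟨x, hx, hsum⟩ := exists_repr_sum_eq_opt hc1 hn v
  have := opt_le (hx.add_single hj)
  rwa [sum_add_single x hj, hsum] at this

lemma opt_coin_le_one {j : ℕ} (hj : j ∈ Icc 1 n) : opt n c (c j) ≤ 1 := by
  have := opt_le (IsRepr.zero.add_single (c := c) hj)
  rwa [sum_add_single 0 hj, Pi.zero_def, sum_const_zero, zero_add] at this

lemma exists_opt_sub_coin_add_one (hc1 : c 1 = 1) (hn : 1 ≤ n) (hv : 0 < v) :
    ∃ j ∈ Icc 1 n, c j ≤ v ∧ opt n c (v - c j) + 1 = opt n c v := by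
  obtain ⟨x, hx, hsum⟩ := exists_repr_sum_eq_opt hc1 hn v
  obtain ⟨j, hj, hxj⟩ : ∃ j ∈ Icc 1 n, 0 < x j := by
    by_contra! h
    have : ∑ i ∈ Icc 1 n, c i * x i = 0 :=
      sum_eq_zero fun i hi => by simp [Nat.le_zero.1 (h i hi)]
    unfold IsRepr at hx
    omega
  set y := x - Pi.single j 1
  have hxy : x = y + Pi.single j 1 := by
    ext i
    by_cases hi : i = j
    · subst hi; simp [y]; omega
    · simp [y, hi]
  rw [hxy] at hx hsum
  rw [IsRepr, sum_mul_add_single c y hj] at hx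
  rw [sum_add_single y hj] at hsum
  have hle : opt n c (v - c j) ≤ ∑ i ∈ Icc 1 n, y i := opt_le (by rw [IsRepr]; omega)
  have hge := opt_add_coin_le hc1 hn hj (v - c j)
  rw [Nat.sub_add_cancel (by omega)] at hge
  exact ⟨j, hj, by omega, by omega⟩

end Representations

section Greedy

variable {n : ℕ} {c : ℕ → ℕ} {v : ℕ}

lemma grd_zero : grd n c 0 = 0 := by rw [grd]; simp

lemma grd_eq_of_largest_coin {j : ℕ} (hj : j ∈ Icc 1 n) (hjv : c j ≤ v) (hpos : 0 < c j)
    (hmax : ∀ i ∈ Icc 1 n, c i ≤ v → c i ≤ c j) :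
    grd n c v = grd n c (v - c j) + 1 := by
  have hsup : ((Icc 1 n).filter (fun i => c i ≤ v)).sup c = c j :=
    le_antisymm (Finset.sup_le fun i hi => (mem_filter.1 hi).elim (hmax i))
      (le_sup (mem_filter.2 ⟨hj, hjv⟩))
  rw [grd, dif_neg (by omega)]
  simp only [hsup, dif_pos hpos]

lemma exists_grd_eq_grd_sub_add_one (hc1 : c 1 = 1) (hn : 1 ≤ n) (hv : 0 < v) :
    ∃ j ∈ Icc 1 n, c j ≤ v ∧ 0 < c j ∧ grd n c v = grd n c (v - c j) + 1 := by
  have h1 : 1 ∈ (Icc 1 n).filter (fun i => c i ≤ v) := by simp [hc1, hn]; omega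
  obtain ⟨j, hj, hsup⟩ := exists_mem_eq_sup _ ⟨1, h1⟩ c
  rw [mem_filter] at hj
  have hpos : 0 < c j := hsup ▸ (le_sup (f := c) h1).trans_lt' (by omega)
  refine ⟨j, hj.1, hj.2, hpos, grd_eq_of_largest_coin hj.1 hj.2 hpos fun i hi hiv => ?_⟩
  exact hsup ▸ le_sup (mem_filter.2 ⟨hi, hiv⟩)

lemma grd_eq_zero_iff (hc1 : c 1 = 1) (hn : 1 ≤ n) : grd n c v = 0 ↔ v = 0 := by
  refine ⟨fun h => ?_, fun h => by rw [h, grd_zero]⟩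
  by_contra hv
  obtain ⟨j, -, -, -, hgrd⟩ := exists_grd_eq_grd_sub_add_one hc1 hn (Nat.pos_of_ne_zero hv)
  omega

lemma grd_le_self (hc1 : c 1 = 1) (hn : 1 ≤ n) (v : ℕ) : grd n c v ≤ v := by
  induction v using Nat.strong_induction_on with
  | _ v ih =>
    rcases Nat.eq_zero_or_pos v with rfl | hv
    · exact grd_zero.le
    · obtain ⟨j, -, hjv, hpos, hgrd⟩ := exists_grd_eq_grd_sub_add_one hc1 hn hv
      have := ih (v - c j) (by omega)
      omega

lemma exists_repr_sum_eq_grd (hc1 : c 1 = 1) (hn : 1 ≤ n) (v : ℕ) :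
    ∃ x, IsRepr n c v x ∧ ∑ i ∈ Icc 1 n, x i = grd n c v := by
  induction v using Nat.strong_induction_on with
  | _ v ih =>
    rcases Nat.eq_zero_or_pos v with rfl | hv
    · exact ⟨0, IsRepr.zero, by simp [grd_zero]⟩
    · obtain ⟨j, hj, hjv, hpos, hgrd⟩ := exists_grd_eq_grd_sub_add_one hc1 hn hv
      obtain ⟨x, hx, hsum⟩ := ih (v - c j) (by omega)
      refine ⟨x + Pi.single j 1, ?_, by rw [sum_add_single x hj, hsum, hgrd]⟩
      simpa [Nat.sub_add_cancel hjv] using hx.add_single hj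

lemma opt_le_grd (hc1 : c 1 = 1) (hn : 1 ≤ n) (v : ℕ) : opt n c v ≤ grd n c v := by
  obtain ⟨x, hx, hsum⟩ := exists_repr_sum_eq_grd hc1 hn v
  exact hsum ▸ opt_le hx

lemma exists_coin_eq_of_grd_le_one (hc1 : c 1 = 1) (hn : 1 ≤ n) (hv : 0 < v)
    (h : grd n c v ≤ 1) : ∃ j ∈ Icc 1 n, c j = v := by
  obtain ⟨j, hj, hjv, -, hgrd⟩ := exists_grd_eq_grd_sub_add_one hc1 hn hv
  have := (grd_eq_zero_iff hc1 hn).1 (by omega : grd n c (v - c j) = 0)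
  exact ⟨j, hj, by omega⟩

lemma grd_eq_of_le_of_lt_succ (hsys : IsSystem n c) {j : ℕ} (hj : j ∈ Icc 1 n) (hjv : c j ≤ v)
    (hnext : j < n → v < c (j + 1)) : grd n c v = grd n c (v - c j) + 1 := by
  rw [mem_Icc] at hj
  have hpos : 0 < c j := by have := hsys.le_coin hj.1 hj.2; omega
  refine grd_eq_of_largest_coin (mem_Icc.2 hj) hjv hpos fun i hi hiv => ?_
  rw [mem_Icc] at hi
  by_cases hij : i ≤ j
  · exact hsys.coin_le hi.1 hij hj.2
  · have := hsys.coin_le (by omega) (by omega : j + 1 ≤ i) hi.2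
    have := hnext (by omega)
    omega

lemma grd_coin (hsys : IsSystem n c) {j : ℕ} (hj : j ∈ Icc 1 n) : grd n c (c j) = 1 := by
  rw [grd_eq_of_le_of_lt_succ hsys hj le_rfl fun hjn => ?_, Nat.sub_self, grd_zero]
  rw [mem_Icc] at hj
  exact hsys.2 ⟨hj.1, hj.2⟩ ⟨by omega, hjn⟩ (Nat.lt_succ_self j)

lemma grd_eq_self_of_lt (hsys : IsSystem n c) (hn : 2 ≤ n) (hv : v < c 2) : grd n c v = v := by
  induction v with
  | zero => exact grd_zero
  | succ v ih =>
    rw [grd_eq_of_le_of_lt_succ hsys (mem_Icc.2 ⟨le_rfl, by omega⟩) (by rw [hsys.1]; omega)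
      fun _ => hv, hsys.1, Nat.add_sub_cancel, ih (by omega)]

lemma grd_succ_eq_of_lt (hv : v < c (n + 1)) : grd (n + 1) c v = grd n c v := by
  induction v using Nat.strong_induction_on with
  | _ v ih =>
    rcases Nat.eq_zero_or_pos v with rfl | hv0
    · rw [grd_zero, grd_zero]
    · have hfilter : (Icc 1 (n + 1)).filter (fun i => c i ≤ v)
          = (Icc 1 n).filter (fun i => c i ≤ v) := by
        rw [← insert_Icc_right_eq_Icc_add_one (by omega), filter_insert, if_neg (by omega)]
      rw [grd, grd, dif_neg hv0.ne', dif_neg hv0.ne']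
      simp only [hfilter]
      split_ifs with hm
      · rw [ih _ (by omega)]
        omega
      · rfl

end Greedy

section Optimal

variable {n : ℕ} {c : ℕ → ℕ} {v : ℕ}

lemma opt_succ_le (hc1 : c 1 = 1) (hn : 1 ≤ n) (v : ℕ) : opt (n + 1) c v ≤ opt n c v := by
  obtain ⟨x, hx, hsum⟩ := exists_repr_sum_eq_opt hc1 hn v
  have hext : ∀ f : ℕ → ℕ, ∑ i ∈ Icc 1 (n + 1), f i * Function.update x (n + 1) 0 i
      = ∑ i ∈ Icc 1 n, f i * x i := fun f => by
    rw [sum_Icc_succ_top (by omega), Function.update_self, mul_zero, add_zero]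
    exact sum_congr rfl fun i hi => by
      rw [Function.update_of_ne (by rw [mem_Icc] at hi; omega)]
  have := opt_le (n := n + 1) (c := c) (v := v) (x := Function.update x (n + 1) 0)
    (by rw [IsRepr, hext c]; exact hx)
  have hcount := hext 1
  simp only [Pi.one_apply, one_mul] at hcount
  rwa [hcount, hsum] at this

lemma le_mul_opt (hc1 : c 1 = 1) (hn : 1 ≤ n) {B : ℕ} (hB : ∀ i ∈ Icc 1 n, c i ≤ B)
    (v : ℕ) : v ≤ B * opt n c v := by
  obtain ⟨x, hx, hsum⟩ := exists_repr_sum_eq_opt hc1 hn v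
  calc v = ∑ i ∈ Icc 1 n, c i * x i := hx.symm
    _ ≤ ∑ i ∈ Icc 1 n, B * x i := sum_le_sum fun i hi => Nat.mul_le_mul_right _ (hB i hi)
    _ = B * opt n c v := by rw [← mul_sum, hsum]

lemma opt_modEq (hc1 : c 1 = 1) (hn : 1 ≤ n) {e : ℕ} (he : ∀ i ∈ Icc 1 n, c i ≡ 1 [MOD e])
    (v : ℕ) : opt n c v ≡ v [MOD e] := by
  obtain ⟨x, hx, hsum⟩ := exists_repr_sum_eq_opt hc1 hn v
  have hsum_modEq : ∑ i ∈ Icc 1 n, x i ≡ ∑ i ∈ Icc 1 n, c i * x i [MOD e] :=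
    Nat.ModEq.sum fun i hi => by simpa using ((he i hi).mul_right (x i)).symm
  rwa [hsum, hx] at hsum_modEq

lemma IsSystem.two_le_opt (hsys : IsSystem n c) (hn : 1 ≤ n) (hv : c n < v) :
    2 ≤ opt n c v := by
  have := le_mul_opt hsys.1 hn (fun i hi => hsys.coin_le (mem_Icc.1 hi).1 (mem_Icc.1 hi).2 le_rfl) v
  by_contra! h
  have := Nat.mul_le_mul_left (c n) (show opt n c v ≤ 1 by omega)
  omega

end Optimal

section Counterexamples

variable {n : ℕ} {c : ℕ → ℕ} {w : ℕ}

lemma exists_minCex (hc1 : c 1 = 1) (hn : 1 ≤ n) (h : ¬ Canonical n c) :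
    ∃ w, MinCex n c w := by
  have hne : {u | IsCex n c u}.Nonempty := by
    simp only [Canonical, not_forall] at h
    obtain ⟨v, hv, hne⟩ := h
    exact ⟨v, hv, lt_of_le_of_ne (opt_le_grd hc1 hn v) hne⟩
  exact ⟨_, Nat.sInf_mem hne, fun u hu => Nat.sInf_le hu⟩

lemma MinCex.opt_eq_grd_of_lt (hc1 : c 1 = 1) (hn : 1 ≤ n) (hw : MinCex n c w) {u : ℕ}
    (hu : 0 < u) (huw : u < w) : opt n c u = grd n c u :=
  (opt_le_grd hc1 hn u).antisymm <| not_lt.1 fun h => by have := hw.2 u ⟨hu, h⟩; omega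

lemma IsCex.le_of_canonical_succ (hc1 : c 1 = 1) (hn : 1 ≤ n) (hw : IsCex n c w)
    (hcan : Canonical (n + 1) c) : c (n + 1) ≤ w := by
  by_contra! hlt
  have := hcan w hw.1
  have := opt_succ_le hc1 hn w
  have := grd_succ_eq_of_lt hlt
  have := hw.2
  omega

/-- The bound of Kozen and Zaks (1994). -/
lemma MinCex.lt_add (hsys : IsSystem (n + 2) c) (hw : MinCex (n + 2) c w) :
    w < c (n + 1) + c (n + 2) := by
  by_contra! hge
  have hc1 := hsys.1
  have hpos := hsys.le_coin (a := n + 1) (by omega) (by omega)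
  have hle := hsys.coin_le (a := n + 1) (b := n + 2) (by omega) (by omega) le_rfl
  have htop : ∀ u, c (n + 2) ≤ u → grd (n + 2) c u = grd (n + 2) c (u - c (n + 2)) + 1 :=
    fun u hu => grd_eq_of_le_of_lt_succ hsys (mem_Icc.2 ⟨by omega, le_rfl⟩) hu (by omega)
  have hmin := fun {u} => hw.opt_eq_grd_of_lt hc1 (by omega) (u := u)
  obtain ⟨j, hj, hjw, hopt⟩ := exists_opt_sub_coin_add_one (n := n + 2) hc1 (by omega) hw.1.1
  have hcex := hw.1.2
  have hgrd := htop w (by omega)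
  have hcj : 0 < c j := by rw [mem_Icc] at hj; have := hsys.le_coin hj.1 hj.2; omega
  by_cases hjtop : j = n + 2
  · subst hjtop
    have := hmin (u := w - c (n + 2)) (by omega) (by omega)
    omega
  · have hjle : c j ≤ c (n + 1) := by
      rw [mem_Icc] at hj
      exact hsys.coin_le hj.1 (by omega) (by omega)
    have h1 := htop (w - c j) (by omega)
    have h2 := hmin (u := w - c j) (by omega) (by omega)
    have h3 := hmin (u := w - c (n + 2)) (by omega) (by omega)
    have h4 := opt_add_coin_le hc1 (by omega) hj (w - c (n + 2) - c j)
    have h5 := opt_le_grd (n := n + 2) hc1 (by omega) (w - c (n + 2) - c j)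
    rw [Nat.sub_add_cancel (show c j ≤ w - c (n + 2) by omega), Nat.sub_right_comm] at h4
    rw [Nat.sub_right_comm] at h5
    omega

lemma canonical_of_grd_le_grd_sub_add_one (hc1 : c 1 = 1) (hn : 1 ≤ n)
    (h : ∀ j ∈ Icc 1 n, ∀ v, c j ≤ v → grd n c v ≤ grd n c (v - c j) + 1) :
    Canonical n c := by
  suffices hle : ∀ v, grd n c v ≤ opt n c v from
    fun v _ => (opt_le_grd hc1 hn v).antisymm (hle v)
  intro v
  induction v using Nat.strong_induction_on with
  | _ v ih =>
    rcases Nat.eq_zero_or_pos v with rfl | hv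
    · rw [grd_zero]; exact Nat.zero_le _
    · obtain ⟨j, hj, hjv, hopt⟩ := exists_opt_sub_coin_add_one hc1 hn hv
      have hcj : 0 < c j := Nat.pos_of_ne_zero fun h0 => by
        rw [h0, Nat.sub_zero] at hopt
        omega
      have := h j hj v hjv
      have := ih (v - c j) (by omega)
      omega

end Counterexamples

lemma add_pred_div_le_add_one {k a b : ℕ} (hk : 0 < k) (hab : a ≤ b + k) :
    (a + k - 1) / k ≤ (b + k - 1) / k + 1 := by
  calc (a + k - 1) / k ≤ (b + k - 1 + k) / k := Nat.div_le_div_right (by omega)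
    _ = (b + k - 1) / k + 1 := Nat.add_div_right _ hk

/-- The greedy count of `r < 2 * p` in `(1, …, k, p, p + 1, 2 * p)`; at `r = p` the second branch
is `1` because `p - p - 1 = 0` in `ℕ`. -/
def grdWindow (k p r : ℕ) : ℕ :=
  if r < p then (r + k - 1) / k else (r - p - 1 + k - 1) / k + 1

section Window

variable {k p a v : ℕ}

lemma grdWindow_le_sub_add_one (hk : 1 ≤ k) (hp : k < p)
    (ha : (1 ≤ a ∧ a ≤ k) ∨ a = p ∨ a = p + 1) (hav : a ≤ v) (hv : v < 2 * p) :
    grdWindow k p v ≤ grdWindow k p (v - a) + 1 := by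
  unfold grdWindow
  split_ifs with h1 h2 h2
  · exact add_pred_div_le_add_one (by omega) (by omega)
  · omega
  · exact Nat.add_le_add_right (Nat.div_le_div_right (by omega)) 1
  · exact Nat.add_le_add_right (add_pred_div_le_add_one hk (by omega)) 1

lemma grdWindow_sub_le (hk : 2 ≤ k) (hp : k < p)
    (ha : (1 ≤ a ∧ a ≤ k) ∨ a = p ∨ a = p + 1 ∨ a = 2 * p) (hv : 2 * p ≤ v)
    (hva : v < 2 * p + a) :
    grdWindow k p (v - 2 * p) ≤ grdWindow k p (v - a) := by
  unfold grdWindow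
  split_ifs with h1 h2 h2
  · exact Nat.div_le_div_right (by omega)
  · exact add_pred_div_le_add_one (by omega) (by omega)
  · rw [← Nat.add_div_right _ (by omega : 0 < k)]
    exact Nat.div_le_div_right (by omega)
  · exact Nat.add_le_add_right (Nat.div_le_div_right (by omega)) 1

end Window

/-- `c` starts with `(1, 2, …, k, p, p + 1, 2 * p)` where `p = c (k + 1) > k + 1`: the right-hand
side of the theorem for `n = k + 3`. -/
def CoinShape (k : ℕ) (c : ℕ → ℕ) : Prop :=
  (∀ i, 1 ≤ i → i ≤ k → c i = i) ∧ c (k + 2) = c (k + 1) + 1 ∧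
    c (k + 3) = 2 * c (k + 1) ∧ k + 1 < c (k + 1)

namespace CoinShape

variable {k : ℕ} {c : ℕ → ℕ}

lemma coin_cases (hs : CoinShape k c) {i : ℕ} (hi : i ∈ Icc 1 (k + 3)) :
    (i ≤ k ∧ c i = i) ∨ i = k + 1 ∨ (i = k + 2 ∧ c i = c (k + 1) + 1) ∨
      (i = k + 3 ∧ c i = 2 * c (k + 1)) := by
  rw [mem_Icc] at hi
  obtain ⟨hsmall, h2, h3, -⟩ := hs
  rcases (by omega : i ≤ k ∨ i = k + 1 ∨ i = k + 2 ∨ i = k + 3) with h | h | rfl | rfl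
  · exact .inl ⟨h, hsmall i hi.1 h⟩
  · exact .inr (.inl h)
  · exact .inr (.inr (.inl ⟨rfl, h2⟩))
  · exact .inr (.inr (.inr ⟨rfl, h3⟩))

lemma isSystem (hs : CoinShape k c) (hk : 1 ≤ k) : IsSystem (k + 3) c := by
  have hp := hs.2.2.2
  refine ⟨hs.1 1 le_rfl hk, fun a ha b hb hab => ?_⟩
  rcases hs.coin_cases (mem_Icc.2 ha) with h | h | h | h <;>
    rcases hs.coin_cases (mem_Icc.2 hb) with h' | h' | h' | h' <;> subst_vars <;> omega

lemma grd_eq_grdWindow (hs : CoinShape k c) (hk : 1 ≤ k) :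
    ∀ r < 2 * c (k + 1), grd (k + 3) c r = grdWindow k (c (k + 1)) r := by
  have hsys := hs.isSystem hk
  have hstep := fun {r j} (hj : j ∈ Icc 1 (k + 3)) => grd_eq_of_le_of_lt_succ (v := r) hsys hj
  obtain ⟨hsmall, h2, h3, hp⟩ := hs
  intro r
  induction r using Nat.strong_induction_on with
  | _ r ih =>
    intro hr
    unfold grdWindow
    rcases Nat.eq_zero_or_pos r with rfl | hr0
    · rw [grd_zero, if_pos (by omega), Nat.div_eq_of_lt (by omega)]
    by_cases hrk : r ≤ k
    · rw [← hsmall r hr0 hrk, grd_coin hsys (mem_Icc.2 ⟨hr0, by omega⟩), hsmall r hr0 hrk,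
        if_pos (by omega), show r + k - 1 = r - 1 + k by omega, Nat.add_div_right _ (by omega),
        Nat.div_eq_of_lt (by omega)]
    by_cases hrp : r < c (k + 1)
    · have hck := hsmall k (by omega) le_rfl
      rw [hstep (j := k) (mem_Icc.2 ⟨by omega, by omega⟩) (by omega) fun _ => hrp, hck,
        ih _ (by omega) (by omega), grdWindow, if_pos (by omega), if_pos hrp,
        ← Nat.add_div_right _ (by omega : 0 < k)]
      congr 1
      omega
    by_cases hrp' : r = c (k + 1)
    · rw [hrp', grd_coin hsys (mem_Icc.2 ⟨by omega, by omega⟩), if_neg (by omega),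
        Nat.sub_self, Nat.zero_sub, zero_add, Nat.div_eq_of_lt (by omega)]
    · rw [hstep (j := k + 2) (mem_Icc.2 ⟨by omega, by omega⟩) (by omega)
        (fun _ => h3 ▸ by omega), h2, ih _ (by omega) (by omega), grdWindow, if_pos (by omega),
        if_neg hrp, Nat.sub_sub]

lemma grd_le_grd_sub_add_one (hs : CoinShape k c) (hk : 2 ≤ k)
    {j : ℕ} (hj : j ∈ Icc 1 (k + 3)) (v : ℕ) (hjv : c j ≤ v) :
    grd (k + 3) c v ≤ grd (k + 3) c (v - c j) + 1 := by
  have hwin := hs.grd_eq_grdWindow (by omega)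
  have hp := hs.2.2.2
  have hcoin : (1 ≤ c j ∧ c j ≤ k) ∨ c j = c (k + 1) ∨ c j = c (k + 1) + 1 ∨
      c j = 2 * c (k + 1) := by
    rcases hs.coin_cases hj with ⟨hjk, hcj⟩ | rfl | ⟨rfl, hcj⟩ | ⟨rfl, hcj⟩ <;>
      rw [mem_Icc] at hj <;> omega
  have htop : ∀ u, 2 * c (k + 1) ≤ u →
      grd (k + 3) c u = grd (k + 3) c (u - 2 * c (k + 1)) + 1 :=
    fun u hu => hs.2.2.1 ▸ grd_eq_of_le_of_lt_succ (hs.isSystem (by omega))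
      (mem_Icc.2 ⟨by omega, le_rfl⟩) (hs.2.2.1 ▸ hu) (by omega)
  induction v using Nat.strong_induction_on with
  | _ v ih =>
    by_cases hbig : 2 * c (k + 1) + c j ≤ v
    · have := ih (v - 2 * c (k + 1)) (by omega) (by omega)
      rw [htop v (by omega), htop (v - c j) (by omega), Nat.sub_right_comm]
      omega
    rw [hwin (v - c j) (by omega)]
    by_cases hv : v < 2 * c (k + 1)
    · rw [hwin v hv]
      exact grdWindow_le_sub_add_one (by omega) (by omega) (by omega) hjv hv
    · rw [htop v (by omega), hwin _ (by omega)]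
      exact Nat.add_le_add_right (grdWindow_sub_le hk (by omega) hcoin (by omega) (by omega)) 1

lemma canonical (hs : CoinShape k c) (hk : 2 ≤ k) : Canonical (k + 3) c :=
  canonical_of_grd_le_grd_sub_add_one (hs.1 1 le_rfl (by omega)) (by omega)
    fun _ hj => hs.grd_le_grd_sub_add_one hk hj

lemma not_canonical (hs : CoinShape k c) (hk : 1 ≤ k) : ¬ Canonical (k + 2) c := by
  have hsys : IsSystem (k + 2) c := (hs.isSystem hk).mono (by omega)
  obtain ⟨hsmall, h2, -, hp⟩ := hs
  have hck := hsmall k hk le_rfl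
  have hmem : k + 1 ∈ Icc 1 (k + 2) := mem_Icc.2 ⟨by omega, by omega⟩
  have hopt : opt (k + 2) c (2 * c (k + 1)) ≤ 2 := by
    have := opt_add_coin_le hsys.1 (by omega) hmem (c (k + 1))
    have := opt_coin_le_one (c := c) hmem
    rw [two_mul]
    omega
  have hgrd : grd (k + 2) c (2 * c (k + 1)) = grd (k + 2) c (c (k + 1) - 1 - k) + 2 := by
    rw [grd_eq_of_le_of_lt_succ hsys (mem_Icc.2 ⟨by omega, le_rfl⟩) (by omega) (by omega), h2,
      grd_eq_of_le_of_lt_succ hsys (mem_Icc.2 ⟨hk, by omega⟩) (by omega) (fun _ => by omega),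
      hck, show 2 * c (k + 1) - (c (k + 1) + 1) - k = c (k + 1) - 1 - k by omega]
  have hrest := (grd_eq_zero_iff hsys.1 (n := k + 2) (by omega)).not.2
    (show c (k + 1) - 1 - k ≠ 0 by omega)
  intro hcan
  have := hcan (2 * c (k + 1)) (by omega)
  omega

end CoinShape

section Forward

variable {k : ℕ} {c : ℕ → ℕ}

lemma add_coin_two_le_of_canonical (hsys : IsSystem (k + 3) c)
    (hcn : c (k + 3) = 2 * c (k + 2) - c 2) (hcan : Canonical (k + 3) c) :
    c (k + 1) + c 2 ≤ c (k + 2) + 1 := by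
  have hc2 := hsys.le_coin (a := 2) (by omega) (by omega)
  have h2 := hsys.coin_le (a := 2) (b := k + 2) (by omega) (by omega) (by omega)
  have h12 := hsys.coin_lt (a := k + 1) (b := k + 2) (by omega) (by omega) (by omega)
  have hgrd : grd (k + 3) c (2 * c (k + 2) - 1) = c 2 := by
    rw [grd_eq_of_le_of_lt_succ (v := 2 * c (k + 2) - 1) hsys (mem_Icc.2 ⟨by omega, le_rfl⟩)
      (by omega) (by omega), show 2 * c (k + 2) - 1 - c (k + 3) = c 2 - 1 by omega,
      grd_eq_self_of_lt hsys (by omega) (by omega)]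
    omega
  have hopt := opt_add_coin_le (n := k + 3) hsys.1 (by omega)
    (mem_Icc.2 ⟨by omega, by omega⟩ : k + 2 ∈ _) (c (k + 2) - 1)
  rw [show c (k + 2) - 1 + c (k + 2) = 2 * c (k + 2) - 1 by omega, hcan _ (by omega), hgrd,
    hcan _ (by omega), grd_eq_of_le_of_lt_succ (v := c (k + 2) - 1) hsys
      (mem_Icc.2 ⟨by omega, by omega⟩ : k + 1 ∈ _) (by omega)
      fun _ => show _ < c (k + 2) by omega] at hopt
  have := grd_le_self (n := k + 3) hsys.1 (by omega) (c (k + 2) - 1 - c (k + 1))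
  omega

lemma exists_coin_add_eq_of_canonical (hsys : IsSystem (k + 3) c) (hcan : Canonical (k + 3) c)
    (hgap : c (k + 1) + c 2 = c (k + 2) + 1) {j : ℕ} (hj2 : 2 ≤ j) (hj : j ≤ k + 1)
    (hlt : c (k + 1) + c j < c (k + 3)) : ∃ i ∈ Icc 1 (k + 3), c i + c 2 = c j + 1 := by
  have h2j := hsys.coin_le (a := 2) (b := j) (by omega) hj2 (by omega)
  have hmem : k + 1 ∈ Icc 1 (k + 3) := mem_Icc.2 ⟨by omega, by omega⟩
  have hopt := opt_add_coin_le hsys.1 (by omega) hmem (c j)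
  have hoptj := opt_coin_le_one (c := c) (mem_Icc.2 ⟨by omega, by omega⟩ : j ∈ Icc 1 (k + 3))
  rw [hcan _ (by omega), grd_eq_of_le_of_lt_succ (v := c j + c (k + 1)) hsys
    (mem_Icc.2 ⟨by omega, by omega⟩ : k + 2 ∈ _) (by omega)
    fun _ => show _ < c (k + 3) by omega] at hopt
  obtain ⟨i, hi, hci⟩ := exists_coin_eq_of_grd_le_one (n := k + 3) hsys.1 (by omega) (by omega)
    (show grd (k + 3) c (c j + c (k + 1) - c (k + 2)) ≤ 1 by omega)
  exact ⟨i, hi, by omega⟩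

lemma grd_subsystem_last_coin_eq (hsys : IsSystem (k + 3) c)
    (hcn : c (k + 3) = 2 * c (k + 2) - c 2) (hgap : c (k + 1) + c 2 = c (k + 2) + 1) :
    grd (k + 2) c (c (k + 3)) = grd (k + 2) c (c (k + 1) - 1) + 1 := by
  have h23 := hsys.coin_lt (a := k + 2) (b := k + 3) (by omega) (by omega) le_rfl
  rw [grd_eq_of_le_of_lt_succ (hsys.mono (by omega)) (mem_Icc.2 ⟨by omega, le_rfl⟩) h23.le
    (by omega)]
  congr 2
  omega

lemma coin_add_two_le (hk : 1 ≤ k) (hsys : IsSystem (k + 3) c)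
    (hcn : c (k + 3) = 2 * c (k + 2) - c 2) (hgap : c (k + 1) + c 2 = c (k + 2) + 1)
    (hcex : IsCex (k + 2) c (c (k + 3))) : c k + 2 ≤ c (k + 1) := by
  have h23 := hsys.coin_lt (a := k + 2) (b := k + 3) (by omega) (by omega) le_rfl
  have hk1 := hsys.coin_lt (a := k) (b := k + 1) hk (by omega) (by omega)
  have hopt := (hsys.mono (by omega)).two_le_opt (by omega) h23
  have hgrd := grd_subsystem_last_coin_eq hsys hcn hgap
  have := hcex.2
  by_contra! h
  rw [show c (k + 1) - 1 = c k by omega,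
    grd_coin (hsys.mono (by omega)) (mem_Icc.2 ⟨hk, by omega⟩)] at hgrd
  omega

/-- Otherwise every coin of the subsystem and `c (k + 3)` are `≡ 1 [MOD c 2 - 1]`, so the optimal
number of coins for `c (k + 3)` is `≡ 1` too; but it is at least `2` and below greedy's `c 2`. -/
lemma coin_two_eq_two (hk : 1 ≤ k) (hsys : IsSystem (k + 3) c)
    (hcn : c (k + 3) = 2 * c (k + 2) - c 2) (hcan : Canonical (k + 3) c)
    (hgap : c (k + 1) + c 2 = c (k + 2) + 1) (hcex : IsCex (k + 2) c (c (k + 3))) : c 2 = 2 := by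
  have hc2 := hsys.le_coin (a := 2) (by omega) (by omega)
  by_contra hne
  have hexists :
      ∀ j, 2 ≤ j → j ≤ k + 2 → ∃ i ∈ Icc 1 (k + 3), c i + c 2 = c j + 1 := by
    intro j hj2 hjk
    rcases (by omega : j ≤ k + 1 ∨ j = k + 2) with hj | rfl
    · have := hsys.coin_le (a := j) (b := k + 1) (by omega) hj (by omega)
      exact exists_coin_add_eq_of_canonical hsys hcan hgap hj2 hj (by omega)
    · exact ⟨k + 1, mem_Icc.2 ⟨by omega, by omega⟩, hgap⟩
  have hprog := hsys.coin_succ_eq_of_exists_coin_add_eq (by omega) hexists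
  set e := c 2 - 1 with he
  have hsys' := hsys.mono (m := k + 2) (by omega)
  have hmod : ∀ i ∈ Icc 1 (k + 2), c i ≡ 1 [MOD e] := fun i hi => by
    rw [mem_Icc] at hi
    have := hprog (i - 1) (by omega)
    rw [Nat.sub_add_cancel hi.1] at this
    rw [this]
    exact Nat.mul_add_mod_self_right _ _ 1
  have hk0 : c k = (k - 1) * e + 1 := by
    simpa [Nat.sub_add_cancel hk] using hprog (k - 1) (by omega)
  have hk1 : c (k + 1) = k * e + 1 := hprog k (by omega)
  have hk2 : c (k + 2) = (k + 1) * e + 1 := hprog (k + 1) (by omega)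
  have e0 : (k - 1) * e + e = k * e := by
    rw [← Nat.succ_mul, Nat.succ_eq_add_one, Nat.sub_add_cancel hk]
  have e1 : (k + 1) * e = k * e + e := by ring
  have e2 : (2 * k + 1) * e + e = 2 * ((k + 1) * e) := by ring
  have htop : c (k + 3) ≡ 1 [MOD e] := by
    rw [show c (k + 3) = (2 * k + 1) * e + 1 by omega]
    exact Nat.mul_add_mod_self_right _ _ 1
  have hopt_mod := (opt_modEq hsys.1 (by omega) hmod (c (k + 3))).trans htop
  have hopt := hsys'.two_le_opt (by omega) (hsys.coin_lt (a := k + 2) (by omega) (by omega) le_rfl)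
  have hgrd := grd_subsystem_last_coin_eq hsys hcn hgap
  rw [grd_eq_of_le_of_lt_succ (v := c (k + 1) - 1) hsys' (mem_Icc.2 ⟨hk, by omega⟩) (by omega)
    (fun _ => show _ < c (k + 1) by omega), show c (k + 1) - 1 - c k = e - 1 by omega,
    grd_eq_self_of_lt (v := e - 1) hsys' (by omega) (by omega)] at hgrd
  have := hcex.2
  rcases (by omega : opt (k + 2) c (c (k + 3)) = e ∨ opt (k + 2) c (c (k + 3)) < e) with h | h
  · rw [Nat.ModEq, h, Nat.mod_self, Nat.mod_eq_of_lt (by omega)] at hopt_mod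
    omega
  · rw [Nat.ModEq, Nat.mod_eq_of_lt h, Nat.mod_eq_of_lt (by omega)] at hopt_mod
    omega

lemma coinShape_of_canonical (hk : 1 ≤ k) (hsys : IsSystem (k + 3) c)
    (hcn : c (k + 3) = 2 * c (k + 2) - c 2) (hcan : Canonical (k + 3) c)
    (hnc : ¬ Canonical (k + 2) c) : CoinShape k c := by
  obtain ⟨w, hw⟩ := exists_minCex hsys.1 (by omega) hnc
  have hw_ge : c (k + 3) ≤ w := hw.1.le_of_canonical_succ hsys.1 (by omega) hcan
  have hw_lt := hw.lt_add (hsys.mono (by omega))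
  have := add_coin_two_le_of_canonical hsys hcn hcan
  have hgap : c (k + 1) + c 2 = c (k + 2) + 1 := by omega
  have hcex : IsCex (k + 2) c (c (k + 3)) := (show w = c (k + 3) by omega) ▸ hw.1
  have hc2 := coin_two_eq_two hk hsys hcn hcan hgap hcex
  have hprog := hsys.coin_succ_eq_of_exists_coin_add_eq (K := k) (by omega) fun j hj2 hjk =>
    have := hsys.coin_lt (a := j) (b := k + 1) (by omega) (by omega) (by omega)
    exists_coin_add_eq_of_canonical hsys hcan hgap hj2 (by omega) (by omega)
  have hsmall : ∀ i, 1 ≤ i → i ≤ k → c i = i := fun i hi hik => by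
    have := hprog (i - 1) (by omega)
    rw [Nat.sub_add_cancel hi, hc2, Nat.add_one_sub_one, mul_one] at this
    omega
  have := coin_add_two_le hk hsys hcn hgap hcex
  have := hsmall k hk le_rfl
  exact ⟨hsmall, by omega, by omega, by omega⟩

end Forward

theorem canonical_and_not_canonical_iff_coinShape {k : ℕ} {c : ℕ → ℕ} (hk : 2 ≤ k)
    (hsys : IsSystem (k + 3) c) (hcn : c (k + 3) = 2 * c (k + 2) - c 2) :
    (Canonical (k + 3) c ∧ ¬ Canonical (k + 2) c) ↔ CoinShape k c :=
  ⟨fun ⟨hcan, hnc⟩ => coinShape_of_canonical (by omega) hsys hcn hcan hnc,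
    fun hs => ⟨hs.canonical hk, hs.not_canonical (by omega)⟩⟩

/-- General characterization for `cₙ = 2c_{n-1} - c₂`. -/
theorem general_characterization (n : ℕ) (c : ℕ → ℕ) (hn : 5 ≤ n)
    (hsys : IsSystem n c) (hcn : c n = 2 * c (n - 1) - c 2) :
    (Canonical n c ∧ ¬ Canonical (n - 1) c) ↔
      ((∀ i, 1 ≤ i → i ≤ n - 3 → c i = i) ∧
        c (n - 1) = c (n - 2) + 1 ∧ c n = 2 * c (n - 2) ∧ n - 2 < c (n - 2)) := by
  obtain ⟨k, rfl⟩ : ∃ k, n = k + 3 := ⟨n - 3, by omega⟩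
  exact canonical_and_not_canonical_iff_coinShape (by omega) hsys hcn
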